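/- Let U ⊆ ℝ be open, let b : U → ℝ be three times differentiable with b(r) > 0 for all r ∈ U, and define P(r) := 2/b − (b′)²/b² + (b′)⁴/(4b³) − (b′)²b″/(2b²) + (b″)²/(2b), where primes denote derivatives in r. If at some r₀ ∈ U one has b′(r₀) = 0 and b″(r₀) = 0, then P is differentiable at r₀ with P′(r₀) = 0. -/

import Mathlib

/-! Along the curve `r ↦ (b, b′, b″)` the chain rule gives
`P′ = ∂_b P · b′ + ∂_{b′} P · b″ + ∂_{b″} P · b‴`. The first two terms carry the factors
`b′` and `b″`, and `∂_{b″} P = b″/b − b′²/(2b²)` vanishes as well when `b′ = b″ = 0`. -/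

noncomputable def quadCurvature (b b₁ b₂ : ℝ) : ℝ :=
  2 / b - b₁ ^ 2 / b ^ 2 + b₁ ^ 4 / (4 * b ^ 3) - b₁ ^ 2 * b₂ / (2 * b ^ 2) + b₂ ^ 2 / (2 * b)

theorem hasDerivAt_quadCurvature {f g h : ℝ → ℝ} {f' g' h' r : ℝ}
    (hf : HasDerivAt f f' r) (hg : HasDerivAt g g' r) (hh : HasDerivAt h h' r)
    (hr : f r ≠ 0) :
    HasDerivAt (fun x => quadCurvature (f x) (g x) (h x))
      ((-2 / f r ^ 2 + 2 * g r ^ 2 / f r ^ 3 - 3 * g r ^ 4 / (4 * f r ^ 4)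
          + g r ^ 2 * h r / f r ^ 3 - h r ^ 2 / (2 * f r ^ 2)) * f'
        + (-2 * g r / f r ^ 2 + g r ^ 3 / f r ^ 3 - g r * h r / f r ^ 2) * g'
        + (h r / f r - g r ^ 2 / (2 * f r ^ 2)) * h') r := by
  have hf2 : f r ^ 2 ≠ 0 := pow_ne_zero 2 hr
  have hf3 : 4 * f r ^ 3 ≠ 0 := by positivity
  have hf2' : 2 * f r ^ 2 ≠ 0 := by positivity
  have hf1' : 2 * f r ≠ 0 := by positivity
  have hP := (((((hasDerivAt_const r (2 : ℝ)).div hf hr).sub ((hg.pow 2).div (hf.pow 2) hf2)).add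
    ((hg.pow 4).div ((hf.pow 3).const_mul 4) hf3)).sub
    (((hg.pow 2).mul hh).div ((hf.pow 2).const_mul 2) hf2')).add
    ((hh.pow 2).div (hf.const_mul 2) hf1')
  refine hP.congr_deriv ?_
  simp only [Pi.pow_apply, Pi.mul_apply]
  field_simp
  ring

theorem rg2_P_deriv_vanishes
    (U : Set ℝ) (b : ℝ → ℝ)
    (hb1 : ∀ x ∈ U, DifferentiableAt ℝ b x)
    (hb2 : ∀ x ∈ U, DifferentiableAt ℝ (deriv b) x)
    (hb3 : ∀ x ∈ U, DifferentiableAt ℝ (deriv (deriv b)) x)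
    (hbpos : ∀ x ∈ U, 0 < b x)
    (r₀ : ℝ) (hr₀ : r₀ ∈ U)
    (h1 : deriv b r₀ = 0) (h2 : deriv (deriv b) r₀ = 0) :
    HasDerivAt (fun r =>
      2 / b r - (deriv b r) ^ 2 / (b r) ^ 2 + (deriv b r) ^ 4 / (4 * (b r) ^ 3)
        - (deriv b r) ^ 2 * deriv (deriv b) r / (2 * (b r) ^ 2)
        + (deriv (deriv b) r) ^ 2 / (2 * b r)) 0 r₀ := by
  have hP := hasDerivAt_quadCurvature (hb1 r₀ hr₀).hasDerivAt (hb2 r₀ hr₀).hasDerivAt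
    (hb3 r₀ hr₀).hasDerivAt (hbpos r₀ hr₀).ne'
  rw [h1, h2] at hP
  norm_num at hP
  exact hP
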